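/- Let n ≥ 2 and suppose J_n(1) has a unique Jaconian vertex, 𝕁(J_n(1)) = {i}. Then: (a) n ≤ i + f(i), i.e. the arc (v_i, v_n) is present in J_n(1); and (b) Δ(J_n(1)) + d_n(n) = n. -/

import Mathlib

/-- The Jaco out-degree function `f`: `f 0 = 0` and, for `n ≥ 1`,
`f n = n - #{k : 1 ≤ k < n ∧ k + f k ≥ n}` (the out-degree of `v_n` in `J_∞(1)`). -/
def jacoF : ℕ → ℕ
  | 0 => 0
  | n + 1 =>
    (n + 1) - ((Finset.range (n + 1)).attach.filter
      (fun a => 1 ≤ a.1 ∧ n + 1 ≤ a.1 + jacoF a.1)).card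
  decreasing_by all_goals exact Finset.mem_range.mp a.2

/-- The in-degree `d⁻(j) = #{i : 1 ≤ i < j ∧ j ≤ i + f i}` of `v_j` in `J_∞(1)`. -/
def jacoDin (j : ℕ) : ℕ := ((Finset.Ico 1 j).filter (fun i => j ≤ i + jacoF i)).card

/-- The degree `d_n(j) = d⁻(j) + #{k : j < k ≤ n ∧ k ≤ j + f j}` of `v_j` in the
underlying undirected graph of the finite Jaco graph `J_n(1)`. -/
def jacoDeg (n j : ℕ) : ℕ :=
  jacoDin j + ((Finset.Ioc j n).filter (fun k => k ≤ j + jacoF j)).card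

/-- The maximum degree `Δ(J_n(1)) = max_{1 ≤ j ≤ n} d_n(j)`. -/
def jacoDelta (n : ℕ) : ℕ := (Finset.Icc 1 n).sup (jacoDeg n)

/-- The Jaconian set `𝕁(J_n(1)) = {j : 1 ≤ j ≤ n ∧ d_n(j) = Δ(J_n(1))}`. -/
def jacoJ (n : ℕ) : Finset ℕ := (Finset.Icc 1 n).filter (fun j => jacoDeg n j = jacoDelta n)

/-!
Put `g k = k + f k`. From `f k + d⁻(k) = k` one gets that `f` is monotone with increments at most
one, so `g` is strictly increasing with increments one or two, and the in-neighbours of `v_n` are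
exactly the `v_k` with `f n ≤ k < n`; hence `g (m - 1) < n ≤ g m ≤ n + 1` for `m = f n`. A vertex
`j < m` has degree `j`, a vertex `j ≥ m` has degree `n - f j`, so the maximum degree is attained
at `m - 1` or `m`. If `g m = n + 1` both have degree `m - 1` and the Jaconian set has two
elements; so `g m = n`, the unique Jaconian vertex is `m`, `Δ = m`, and `d_n(n) = n - f n = n - m`.
-/

open Finset

@[simp] lemma jacoF_zero : jacoF 0 = 0 := by rw [jacoF]

lemma jacoF_succ (n : ℕ) : jacoF (n + 1) = (n + 1) - jacoDin (n + 1) := by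
  rw [jacoF, filter_attach (fun k => 1 ≤ k ∧ n + 1 ≤ k + jacoF k), card_map, card_attach,
    jacoDin]
  congr 2
  ext k
  simp only [mem_filter, mem_range, mem_Ico]
  omega

lemma jacoDin_le_pred (n : ℕ) : jacoDin n ≤ n - 1 :=
  (card_filter_le _ _).trans (Nat.card_Ico 1 n).le

lemma jacoF_add_jacoDin {n : ℕ} (hn : 1 ≤ n) : jacoF n + jacoDin n = n := by
  obtain ⟨m, rfl⟩ : ∃ m, n = m + 1 := ⟨n - 1, by omega⟩
  have := jacoDin_le_pred (m + 1)
  rw [jacoF_succ]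
  omega

lemma jacoF_le (n : ℕ) : jacoF n ≤ n := by
  rcases Nat.eq_zero_or_pos n with rfl | hn
  · simp
  · have := jacoF_add_jacoDin hn
    omega

lemma jacoF_one : jacoF 1 = 1 := by
  have h := jacoF_add_jacoDin le_rfl
  rwa [jacoDin, Ico_self, filter_empty, card_empty, add_zero] at h

lemma jacoDin_succ_le (k : ℕ) : jacoDin (k + 1) ≤ jacoDin k + 1 := by
  have hsub : (Ico 1 (k + 1)).filter (fun i => k + 1 ≤ i + jacoF i) ⊆
      insert k ((Ico 1 k).filter (fun i => k ≤ i + jacoF i)) := by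
    intro x hx
    simp only [mem_filter, mem_Ico, mem_insert] at hx ⊢
    omega
  exact (card_le_card hsub).trans (card_insert_le _ _)

lemma jacoF_le_succ (k : ℕ) : jacoF k ≤ jacoF (k + 1) := by
  rcases Nat.eq_zero_or_pos k with rfl | hk
  · simp
  · have := jacoF_add_jacoDin hk
    have := jacoF_add_jacoDin (Nat.le_add_left 1 k)
    have := jacoDin_succ_le k
    omega

lemma jacoF_mono : Monotone jacoF := monotone_nat_of_le_succ jacoF_le_succ

lemma jacoF_pos {n : ℕ} (hn : 1 ≤ n) : 0 < jacoF n := by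
  have := jacoF_mono hn
  rw [jacoF_one] at this
  omega

lemma jacoDin_le_succ (k : ℕ) : jacoDin k ≤ jacoDin (k + 1) := by
  refine card_le_card_of_injOn (· + 1) (fun x hx => ?_) (fun a _ b _ hab => Nat.succ_injective hab)
  simp only [coe_filter, Set.mem_ofPred_eq, mem_Ico] at hx ⊢
  have := jacoF_le_succ x
  omega

lemma jacoF_succ_le (k : ℕ) : jacoF (k + 1) ≤ jacoF k + 1 := by
  rcases Nat.eq_zero_or_pos k with rfl | hk
  · simp [jacoF_one]
  · have := jacoF_add_jacoDin hk
    have := jacoF_add_jacoDin (Nat.le_add_left 1 k)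
    have := jacoDin_le_succ k
    omega

lemma le_add_jacoF_iff {n : ℕ} (hn : 1 ≤ n) (k : ℕ) : n ≤ k + jacoF k ↔ jacoF n ≤ k := by
  have hex : ∃ k, n ≤ k + jacoF k := ⟨n, Nat.le_add_right n _⟩
  have hfind : ∀ k, n ≤ k + jacoF k ↔ Nat.find hex ≤ k := fun k =>
    ⟨fun hk => Nat.find_min' hex hk, fun hk =>
      (Nat.find_spec hex).trans (Nat.add_le_add hk (jacoF_mono hk))⟩
  have hpos : 1 ≤ Nat.find hex := by
    by_contra h0
    have := (hfind 0).2 (by omega)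
    rw [jacoF_zero] at this
    omega
  have hin : (Ico 1 n).filter (fun k => n ≤ k + jacoF k) = Ico (Nat.find hex) n := by
    ext k
    simp only [mem_filter, mem_Ico]
    rw [hfind]
    omega
  have hle : Nat.find hex ≤ n := (hfind n).1 (Nat.le_add_right n _)
  have hf : jacoF n = Nat.find hex := by
    have := jacoF_add_jacoDin hn
    rw [jacoDin, hin, Nat.card_Ico] at this
    omega
  rw [hf, hfind]

lemma le_jacoF_add_jacoF_jacoF {n : ℕ} (hn : 1 ≤ n) : n ≤ jacoF n + jacoF (jacoF n) :=
  (le_add_jacoF_iff hn _).2 le_rfl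

lemma jacoF_add_jacoF_jacoF_le {n : ℕ} (hn : 1 ≤ n) : jacoF n + jacoF (jacoF n) ≤ n + 1 := by
  obtain ⟨p, hp⟩ : ∃ p, jacoF n = p + 1 := ⟨jacoF n - 1, by have := jacoF_pos hn; omega⟩
  have hbefore : p + jacoF p < n := by
    rw [← not_le, le_add_jacoF_iff hn]
    omega
  have := jacoF_succ_le p
  rw [hp]
  omega

lemma jacoDeg_eq (n j : ℕ) : jacoDeg n j = jacoDin j + (min n (j + jacoF j) - j) := by
  have : (Ioc j n).filter (fun k => k ≤ j + jacoF j) = Ioc j (min n (j + jacoF j)) := by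
    ext k
    simp only [mem_filter, mem_Ioc, le_min_iff]
    omega
  rw [jacoDeg, this, Nat.card_Ioc]

lemma jacoDeg_of_add_jacoF_le {n j : ℕ} (hj : 1 ≤ j) (h : j + jacoF j ≤ n) : jacoDeg n j = j := by
  have := jacoF_add_jacoDin hj
  rw [jacoDeg_eq]
  omega

lemma jacoDeg_of_le_add_jacoF {n j : ℕ} (hj : 1 ≤ j) (hjn : j ≤ n) (h : n ≤ j + jacoF j) :
    jacoDeg n j = n - jacoF j := by
  have := jacoF_add_jacoDin hj
  rw [jacoDeg_eq]
  omega

lemma jacoDeg_self {n : ℕ} (hn : 1 ≤ n) : jacoDeg n n = n - jacoF n :=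
  jacoDeg_of_le_add_jacoF hn le_rfl (Nat.le_add_right n _)

lemma jacoDeg_le_max {n k : ℕ} (hn : 1 ≤ n) (hk : k ∈ Icc 1 n) :
    jacoDeg n k ≤ max (jacoF n - 1) (n - jacoF (jacoF n)) := by
  rw [mem_Icc] at hk
  by_cases hkn : jacoF n ≤ k
  · rw [jacoDeg_of_le_add_jacoF hk.1 hk.2 ((le_add_jacoF_iff hn k).2 hkn)]
    have := jacoF_mono hkn
    omega
  · have hlt : k + jacoF k < n := by rwa [← not_le, le_add_jacoF_iff hn]
    rw [jacoDeg_of_add_jacoF_le hk.1 hlt.le]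
    omega

lemma jacoDelta_eq_of_forall_le {n j : ℕ} (hj : j ∈ Icc 1 n)
    (hmax : ∀ k ∈ Icc 1 n, jacoDeg n k ≤ jacoDeg n j) : jacoDelta n = jacoDeg n j :=
  le_antisymm (Finset.sup_le hmax) (le_sup hj)

lemma mem_jacoJ_of_forall_le {n j : ℕ} (hj : j ∈ Icc 1 n)
    (hmax : ∀ k ∈ Icc 1 n, jacoDeg n k ≤ jacoDeg n j) : j ∈ jacoJ n :=
  mem_filter.2 ⟨hj, (jacoDelta_eq_of_forall_le hj hmax).symm⟩

lemma jacoF_add_jacoF_jacoF_eq_of_jacoJ_eq_singleton {n i : ℕ} (hn : 2 ≤ n)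
    (h : jacoJ n = {i}) : jacoF n + jacoF (jacoF n) = n := by
  have hn1 : 1 ≤ n := by omega
  have hlow := le_jacoF_add_jacoF_jacoF hn1
  have hup := jacoF_add_jacoF_jacoF_le hn1
  have hbound := fun k (hk : k ∈ Icc 1 n) => jacoDeg_le_max hn1 hk
  have hm1 := jacoF_pos hn1
  have hmn := jacoF_le n
  generalize hm : jacoF n = m at hlow hup hbound hm1 hmn ⊢
  by_contra hne
  have hm2 : 2 ≤ m := by
    by_contra hlt
    obtain rfl : m = 1 := by omega
    have := jacoF_one
    omega
  have hbefore : m - 1 + jacoF (m - 1) < n := by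
    rw [← not_le, le_add_jacoF_iff hn1, hm]
    omega
  have hdeg_pred : jacoDeg n (m - 1) = m - 1 := jacoDeg_of_add_jacoF_le (by omega) hbefore.le
  have hdeg : jacoDeg n m = m - 1 := by
    rw [jacoDeg_of_le_add_jacoF (by omega) hmn hlow]
    omega
  have hpred : m - 1 ∈ jacoJ n := mem_jacoJ_of_forall_le (mem_Icc.2 ⟨by omega, by omega⟩)
    fun k hk => by have := hbound k hk; omega
  have hmem : m ∈ jacoJ n := mem_jacoJ_of_forall_le (mem_Icc.2 ⟨by omega, hmn⟩)
    fun k hk => by have := hbound k hk; omega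
  rw [h, mem_singleton] at hpred hmem
  omega

/-- If `J_n(1)` has a unique Jaconian vertex `v_i`, then the arc `(v_i, v_n)` is present
(i.e. `n ≤ i + f i`) and `Δ(J_n(1)) + d_n(n) = n`. -/
theorem stmt_12 (n i : ℕ) (hn : 2 ≤ n) (h : jacoJ n = {i}) :
    n ≤ i + jacoF i ∧ jacoDelta n + jacoDeg n n = n := by
  have hn1 : 1 ≤ n := by omega
  have hsum := jacoF_add_jacoF_jacoF_eq_of_jacoJ_eq_singleton hn h
  have hmem : jacoF n ∈ Icc 1 n := mem_Icc.2 ⟨jacoF_pos hn1, jacoF_le n⟩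
  have hdeg : jacoDeg n (jacoF n) = jacoF n :=
    (jacoDeg_of_le_add_jacoF (jacoF_pos hn1) (jacoF_le n) hsum.ge).trans (by omega)
  have hmax : ∀ k ∈ Icc 1 n, jacoDeg n k ≤ jacoDeg n (jacoF n) := fun k hk => by
    have := jacoDeg_le_max hn1 hk
    omega
  have hi : jacoF n = i := by
    simpa [h] using mem_jacoJ_of_forall_le hmem hmax
  subst hi
  refine ⟨hsum.ge, ?_⟩
  rw [jacoDelta_eq_of_forall_le hmem hmax, hdeg, jacoDeg_self hn1]
  have := jacoF_le n
  omega
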